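/- Fractional Gronwall lemma: let α ∈ (0,1), L ≥ 0, and u : [0,a] → ℝ continuous and nonnegative with u(0) = 0 satisfying u(s) ≤ L · I^α u(s) = L ∫₀^s (s−β)^{α−1}/Γ(α) u(β) dβ for all s ∈ [0,a]. Then u ≡ 0 on [0,a]. -/

import Mathlib

/-!
If `u` vanishes on `[0, T]` and `L δ ^ α < Γ(α + 1)`, the maximum `M` of `u` on `[T, T + δ]` is
bounded by `L` times the fractional integral of the constant `M` over an interval of length at
most `δ`, i.e. `M ≤ M · L δ ^ α / Γ(α + 1)`, which forces `M = 0`. Stepping by `δ` from `0`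
exhausts `[0, a]`.
-/

open intervalIntegral
open Real Set
open MeasureTheory (volume)

noncomputable def riemannLiouville (α : ℝ) (u : ℝ → ℝ) (s : ℝ) : ℝ :=
  ∫ β in (0:ℝ)..s, (s - β) ^ (α - 1) / Gamma α * u β

theorem intervalIntegrable_sub_rpow {α : ℝ} (hα : 0 < α) (s x y : ℝ) :
    IntervalIntegrable (fun β => (s - β) ^ (α - 1)) volume x y := by
  simpa only [sub_sub_cancel] using
    (intervalIntegrable_rpow' (a := s - x) (b := s - y) (by linarith : -1 < α - 1)).comp_sub_left s

theorem integral_sub_rpow_div_Gamma {α : ℝ} (hα : 0 < α) (s T : ℝ) :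
    ∫ β in T..s, (s - β) ^ (α - 1) / Gamma α = (s - T) ^ α / Gamma (α + 1) := by
  rw [integral_div, integral_comp_sub_left (fun x => x ^ (α - 1)) s,
    integral_rpow (Or.inl (by linarith)), sub_self, sub_add_cancel, zero_rpow hα.ne',
    Gamma_add_one hα.ne']
  ring

theorem riemannLiouville_le_of_eqOn_zero {α T s M : ℝ} {u : ℝ → ℝ} (hα : 0 < α) (hT : 0 ≤ T)
    (hTs : T ≤ s) (huc : ContinuousOn u (Icc 0 s)) (hzero : ∀ β ∈ Icc 0 T, u β = 0)
    (hM : ∀ β ∈ Icc T s, u β ≤ M) :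
    riemannLiouville α u s ≤ M * (s - T) ^ α / Gamma (α + 1) := by
  have hint : ∀ x ∈ Icc 0 s, ∀ y ∈ Icc 0 s,
      IntervalIntegrable (fun β => (s - β) ^ (α - 1) / Gamma α * u β) volume x y :=
    fun x hx y hy => ((intervalIntegrable_sub_rpow hα s x y).div_const _).mul_continuousOn
      (huc.mono (uIcc_subset_Icc hx hy))
  have hT' : T ∈ Icc 0 s := ⟨hT, hTs⟩
  have hs : s ∈ Icc 0 s := ⟨hT.trans hTs, le_rfl⟩
  have hvanish : ∫ β in (0:ℝ)..T, (s - β) ^ (α - 1) / Gamma α * u β = 0 := by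
    rw [integral_congr (g := fun _ => 0) fun β hβ => ?_, integral_zero]
    rw [uIcc_of_le hT] at hβ
    simp [hzero β hβ]
  have hbound : ∫ β in T..s, (s - β) ^ (α - 1) / Gamma α * u β
      ≤ ∫ β in T..s, (s - β) ^ (α - 1) / Gamma α * M := by
    refine integral_mono_on hTs (hint T hT' s hs)
      ((intervalIntegrable_sub_rpow hα s T s).div_const _ |>.mul_const M) fun β hβ => ?_
    have hkernel : 0 ≤ (s - β) ^ (α - 1) / Gamma α :=
      div_nonneg (rpow_nonneg (by linarith [hβ.2]) _) (Gamma_pos_of_pos hα).le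
    exact mul_le_mul_of_nonneg_left (hM β hβ) hkernel
  calc riemannLiouville α u s
      = ∫ β in T..s, (s - β) ^ (α - 1) / Gamma α * u β := by
        rw [riemannLiouville, ← integral_add_adjacent_intervals (hint 0 ⟨le_rfl, hT.trans hTs⟩ T hT')
          (hint T hT' s hs), hvanish, zero_add]
    _ ≤ ∫ β in T..s, (s - β) ^ (α - 1) / Gamma α * M := hbound
    _ = M * (s - T) ^ α / Gamma (α + 1) := by
        rw [integral_mul_const, integral_sub_rpow_div_Gamma hα]
        ring

theorem eqOn_zero_of_le_mul_riemannLiouville {α L T b : ℝ} {u : ℝ → ℝ} (hα : 0 < α) (hL : 0 ≤ L)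
    (hT : 0 ≤ T) (hTb : T ≤ b) (huc : ContinuousOn u (Icc 0 b))
    (hpos : ∀ s ∈ Icc T b, 0 ≤ u s) (hzero : ∀ s ∈ Icc 0 T, u s = 0)
    (hineq : ∀ s ∈ Icc T b, u s ≤ L * riemannLiouville α u s)
    (hsmall : L * (b - T) ^ α < Gamma (α + 1)) :
    ∀ s ∈ Icc T b, u s = 0 := by
  obtain ⟨m, hm, hmax⟩ := isCompact_Icc.exists_isMaxOn (nonempty_Icc.2 hTb)
    (huc.mono (Icc_subset_Icc_left hT))
  have hΓ : 0 < Gamma (α + 1) := Gamma_pos_of_pos (by linarith)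
  have hmax_nonpos : u m ≤ 0 := by
    have hbound := riemannLiouville_le_of_eqOn_zero hα hT hm.1
      (huc.mono (Icc_subset_Icc_right hm.2)) hzero fun β hβ => hmax ⟨hβ.1, hβ.2.trans hm.2⟩
    have hpow : (m - T) ^ α ≤ (b - T) ^ α :=
      rpow_le_rpow (by linarith [hm.1]) (by linarith [hm.2]) hα.le
    have hle : u m * Gamma (α + 1) ≤ u m * (L * (b - T) ^ α) := by
      calc u m * Gamma (α + 1) ≤ L * riemannLiouville α u m * Gamma (α + 1) := by
            gcongr; exact hineq m hm
        _ ≤ L * (u m * (m - T) ^ α / Gamma (α + 1)) * Gamma (α + 1) := by gcongr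
        _ = u m * (L * (m - T) ^ α) := by field_simp
        _ ≤ u m * (L * (b - T) ^ α) := by gcongr; exact hpos m hm
    nlinarith
  exact fun s hs => le_antisymm ((hmax hs).trans hmax_nonpos) (hpos s hs)

open Filter Topology in
theorem exists_pos_mul_rpow_lt {α c : ℝ} (hα : 0 < α) (hc : 0 < c) (L : ℝ) :
    ∃ δ > 0, L * δ ^ α < c := by
  have hlim : Tendsto (fun δ : ℝ => L * δ ^ α) (𝓝[>] 0) (𝓝 0) := by
    simpa [zero_rpow hα.ne'] using
      ((continuous_rpow_const hα.le).tendsto 0).mono_left nhdsWithin_le_nhds |>.const_mul L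
  exact ((hlim.eventually (gt_mem_nhds hc)).and self_mem_nhdsWithin).exists.imp
    fun δ h => ⟨h.2, h.1⟩

theorem forall_mem_Icc_of_step {p : ℝ → Prop} {a δ : ℝ} (hδ : 0 < δ) (h0 : p 0)
    (hstep : ∀ T ∈ Icc 0 a, (∀ s ∈ Icc 0 T, p s) → ∀ s ∈ Icc T (min (T + δ) a), p s) :
    ∀ s ∈ Icc 0 a, p s := by
  have hsteps : ∀ n : ℕ, ∀ s ∈ Icc 0 a, s ≤ n * δ → p s := by
    intro n
    induction n with
    | zero =>
      intro s hs hs0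
      rwa [le_antisymm (by simpa using hs0) hs.1]
    | succ n ih =>
      intro s hs hsn
      rw [Nat.cast_succ, add_one_mul] at hsn
      rcases le_or_gt s (n * δ) with hsT | hTs
      · exact ih s hs hsT
      have hTa : n * δ ≤ a := hTs.le.trans hs.2
      exact hstep _ ⟨by positivity, hTa⟩ (fun t ht => ih t ⟨ht.1, ht.2.trans hTa⟩ ht.2) s
        ⟨hTs.le, le_min hsn hs.2⟩
  intro s hs
  obtain ⟨n, hn⟩ := exists_nat_ge (s / δ)
  exact hsteps n s hs ((div_le_iff₀ hδ).mp hn)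

theorem fractional_gronwall_general (a α L : ℝ) (hα : 0 < α)
    (hL : 0 ≤ L)
    (u : ℝ → ℝ) (huc : ContinuousOn u (Set.Icc 0 a))
    (hupos : ∀ s ∈ Set.Icc (0:ℝ) a, 0 ≤ u s) (hu0 : u 0 = 0)
    (hineq : ∀ s ∈ Set.Icc (0:ℝ) a,
      u s ≤ L * ∫ β in (0:ℝ)..s, (s - β) ^ (α - 1) / Real.Gamma α * u β) :
    ∀ s ∈ Set.Icc (0:ℝ) a, u s = 0 := by
  obtain ⟨δ, hδ, hLδ⟩ := exists_pos_mul_rpow_lt hα (Gamma_pos_of_pos (by linarith : 0 < α + 1)) L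
  refine forall_mem_Icc_of_step hδ hu0 fun T hT hzero => ?_
  have hTb : T ≤ min (T + δ) a := le_min (by linarith) hT.2
  have hb : Icc T (min (T + δ) a) ⊆ Icc 0 a := Icc_subset_Icc hT.1 (min_le_right _ _)
  refine eqOn_zero_of_le_mul_riemannLiouville hα hL hT.1 hTb
    (huc.mono (Icc_subset_Icc_right (min_le_right _ _))) (fun s hs => hupos s (hb hs)) hzero
    (fun s hs => hineq s (hb hs)) (hLδ.trans_le' ?_)
  gcongr
  exact sub_le_iff_le_add'.2 (min_le_left _ _)

theorem fractional_gronwall (a α L : ℝ) (ha : 0 < a) (hα : 0 < α)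
    (hα1 : α < 1) (hL : 0 ≤ L)
    (u : ℝ → ℝ) (huc : ContinuousOn u (Set.Icc 0 a))
    (hupos : ∀ s ∈ Set.Icc (0:ℝ) a, 0 ≤ u s) (hu0 : u 0 = 0)
    (hineq : ∀ s ∈ Set.Icc (0:ℝ) a,
      u s ≤ L * ∫ β in (0:ℝ)..s, (s - β) ^ (α - 1) / Real.Gamma α * u β) :
    ∀ s ∈ Set.Icc (0:ℝ) a, u s = 0 :=
  fractional_gronwall_general a α L hα hL u huc hupos hu0 hineq
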